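/- arXiv:1608.00959 — 12 statements merged into one kernel-verified Lean document; each statement's English description precedes it below -/
import Mathlib

section
/- Let G be a linearly ordered group and let (a,b), (c,d) be elements of the semigroup 𝓑(G). Then the following are equivalent: (i) (a,b) ≼ (c,d) in the natural partial order of 𝓑(G); (ii) a⁻¹·b = c⁻¹·d and c ≤ a in G; (iii) b⁻¹·a = d⁻¹·c and d ≤ b in G. -/
/-- The multiplication of the bicyclic extension `𝓑(G) = G × G` of a linearly ordered
group `G`: `(a,b)·(c,d) = (c·b⁻¹·a, d)` if `b < c`; `(a,d)` if `b = c`;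
`(a, b·c⁻¹·d)` if `b > c`. -/
def bmul {G : Type*} [Group G] [LinearOrder G] (s t : G × G) : G × G :=
  if s.2 < t.1 then (t.1 * s.2⁻¹ * s.1, t.2)
  else if s.2 = t.1 then (s.1, t.2)
  else (s.1, s.2 * t.1⁻¹ * t.2)

/-- The natural partial order on `𝓑(G)`: `s ≼ t` iff `s = e·t` for some idempotent
`e` of `𝓑(G)`; the idempotents of `𝓑(G)` are exactly the pairs `(x,x)`. -/
def ble {G : Type*} [Group G] [LinearOrder G] (s t : G × G) : Prop :=
  ∃ x : G, bmul (x, x) t = s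

/-- Lemma 2.1: for a linearly ordered group `G` and `(a,b), (c,d) ∈ 𝓑(G)`, the
following are equivalent: (i) `(a,b) ≼ (c,d)`; (ii) `a⁻¹·b = c⁻¹·d` and `c ≤ a`;
(iii) `b⁻¹·a = d⁻¹·c` and `d ≤ b`. -/
theorem natural_order_iff {G : Type*} [Group G] [LinearOrder G]
    [CovariantClass G G (· * ·) (· ≤ ·)]
    [CovariantClass G G (Function.swap (· * ·)) (· ≤ ·)]
    (a b c d : G) :
    (ble (a, b) (c, d) ↔ a⁻¹ * b = c⁻¹ * d ∧ c ≤ a) ∧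
    (ble (a, b) (c, d) ↔ b⁻¹ * a = d⁻¹ * c ∧ d ≤ b) := by
  have h2 : ble (a, b) (c, d) ↔ a⁻¹ * b = c⁻¹ * d ∧ c ≤ a := by
    constructor
    · rintro ⟨x, hx⟩
      rcases lt_trichotomy x c with h | h | h
      · simp only [bmul, h, if_pos, Prod.mk.injEq] at hx
        obtain ⟨rfl, rfl⟩ : c * x⁻¹ * x = a ∧ d = b := by
          simpa using hx
        simp [mul_assoc]
      · subst h
        simp only [bmul, lt_irrefl, if_neg, if_pos rfl, Prod.mk.injEq] at hx
        obtain ⟨rfl, rfl⟩ := hx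
        simp
      · simp only [bmul, not_lt.2 h.le, if_neg, h.ne', if_false, Prod.mk.injEq] at hx
        obtain ⟨rfl, rfl⟩ := hx
        refine ⟨by group, h.le⟩
    · rintro ⟨heq, hle⟩
      have hb : b = a * c⁻¹ * d := by
        have := congrArg (a * ·) heq
        simpa [mul_assoc] using this
      refine ⟨a, ?_⟩
      rcases eq_or_lt_of_le hle with h | h
      · subst h
        simp only [bmul, lt_irrefl, if_neg, if_pos rfl]
        rw [hb]; simp
      · simp only [bmul, not_lt.2 h.le, if_neg, h.ne', if_false]
        rw [hb]
  refine ⟨h2, h2.trans ?_⟩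
  constructor
  · rintro ⟨heq, hle⟩
    have hb : b = a * c⁻¹ * d := by
      have := congrArg (a * ·) heq
      simpa [mul_assoc] using this
    constructor
    · rw [hb]; group
    · rw [hb]
      calc d = 1 * d := (one_mul d).symm
        _ ≤ a * c⁻¹ * d := mul_le_mul_left ((div_eq_mul_inv a c) ▸ one_le_div'.2 hle) d
  · rintro ⟨heq, hle⟩
    have ha : a = b * d⁻¹ * c := by
      have := congrArg (b * ·) heq
      simpa [mul_assoc] using this
    constructor
    · rw [ha]; group
    · rw [ha]
      calc c = 1 * c := (one_mul c).symm
        _ ≤ b * d⁻¹ * c := mul_le_mul_left ((div_eq_mul_inv b d) ▸ one_le_div'.2 hle) c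
end

section
/- Let G be a linearly ordered group and let a, b, c be elements of G. For (x,y) ∈ G × G, the equation (a,b) = (a,c)·(x,y) holds in 𝓑(G) if and only if (c,b) ≼ (x,y) in the natural partial order of 𝓑(G). -/
/-- Proposition 2.2(i): `(a,b) = (a,c)·(x,y)` in `𝓑(G)` iff `(c,b) ≼ (x,y)`. -/
theorem eq_left_factor_iff {G : Type*} [Group G] [LinearOrder G]
    [CovariantClass G G (· * ·) (· ≤ ·)]
    [CovariantClass G G (Function.swap (· * ·)) (· ≤ ·)]
    (a b c : G) (x y : G) :
    (a, b) = bmul (a, c) (x, y) ↔ ble (c, b) (x, y) := by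
  constructor
  · intro h
    refine ⟨c, ?_⟩
    unfold bmul at h ⊢
    rcases lt_trichotomy c x with hcx | hcx | hcx
    · simp only [hcx, if_pos, Prod.mk.injEq] at h
      exfalso
      have h1 : (1 : G) * a = x * c⁻¹ * a := by simpa using h.1
      have : (1 : G) = x * c⁻¹ := mul_right_cancel h1
      have : x = c := by
        have := (mul_inv_eq_one).mp this.symm
        exact this
      exact absurd this hcx.ne'
    · simp only [hcx, lt_irrefl, if_neg, if_pos] at h ⊢
      simp_all
    · have h1 : ¬ c < x := not_lt.mpr hcx.le
      have h2 : c ≠ x := hcx.ne'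
      simp only [if_neg h1, if_neg h2, Prod.mk.injEq] at h ⊢
      exact ⟨trivial, h.2.symm⟩
  · rintro ⟨z, hz⟩
    unfold bmul at hz ⊢
    rcases lt_trichotomy z x with hzx | hzx | hzx
    · simp only [if_pos hzx, Prod.mk.injEq] at hz
      have hc : x = c := by simpa [mul_assoc] using hz.1
      simp [← hc, hz.2]
    · simp only [hzx, lt_irrefl, if_neg, if_pos] at hz
      obtain ⟨h1, h2⟩ := Prod.mk.injEq .. ▸ hz
      subst hzx
      simp [h1, h2]
    · have h1 : ¬ z < x := not_lt.mpr hzx.le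
      have h2 : z ≠ x := hzx.ne'
      simp only [if_neg h1, if_neg h2, Prod.mk.injEq] at hz
      obtain ⟨hc, hb⟩ := hz
      subst hc
      simp [not_lt.mpr hzx.le, hzx.ne', ← hb]
end

section
/- Let G be a linearly ordered group and let a, b, d be elements of G. For (x,y) ∈ G × G, the equation (a,b) = (x,y)·(d,b) holds in 𝓑(G) if and only if (a,d) ≼ (x,y) in the natural partial order of 𝓑(G). -/
/-!
Both sides reduce to the same coset condition `a⁻¹ * d = x⁻¹ * y` plus an order condition:
the equation forces `y ≤ d` (for `y > d` the second coordinate `y * d⁻¹ * b` is not `b`),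
and `(a, d) ≼ (x, y)` means `x ≤ a`. Once `d = a * x⁻¹ * y`, right invariance of the order
turns `y ≤ d` into `x ≤ a`.
-/

theorem inv_mul_eq_inv_mul_iff_eq_mul_inv_mul {G : Type*} [Group G] {a b c d : G} :
    a⁻¹ * b = c⁻¹ * d ↔ b = a * c⁻¹ * d := by
  rw [inv_mul_eq_iff_eq_mul, mul_assoc]

section

variable {G : Type*} [Group G] [LinearOrder G]

theorem ble_iff {a b c d : G} : ble (a, b) (c, d) ↔ a⁻¹ * b = c⁻¹ * d ∧ c ≤ a := by
  rw [inv_mul_eq_inv_mul_iff_eq_mul_inv_mul]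
  constructor
  · rintro ⟨z, hz⟩
    dsimp only [bmul] at hz
    split_ifs at hz with hlt heq <;> simp only [Prod.mk.injEq] at hz <;> obtain ⟨rfl, rfl⟩ := hz
    · simp
    · simp [heq]
    · exact ⟨rfl, not_lt.mp hlt⟩
  · rintro ⟨rfl, hca⟩
    refine ⟨a, ?_⟩
    dsimp only [bmul]
    rw [if_neg hca.not_gt]
    split_ifs with hac
    · simp [hac]
    · rfl

theorem eq_bmul_iff {a b d x y : G} :
    (a, b) = bmul (x, y) (d, b) ↔ a⁻¹ * d = x⁻¹ * y ∧ y ≤ d := by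
  rw [inv_mul_eq_inv_mul_iff_eq_mul_inv_mul]
  dsimp only [bmul]
  split_ifs with hlt heq <;> simp only [Prod.mk.injEq, and_true]
  · simp only [hlt.le, and_true]
    constructor <;> rintro rfl <;> group
  · subst heq
    simp [right_eq_mul, mul_inv_eq_one]
  · refine iff_of_false (fun ⟨_, hb⟩ => heq ?_) (fun ⟨_, hyd⟩ => hlt (hyd.lt_of_ne heq))
    rwa [right_eq_mul, mul_inv_eq_one] at hb

end

theorem eq_right_factor_iff_general {G : Type*} [Group G] [LinearOrder G]
    [CovariantClass G G (Function.swap (· * ·)) (· ≤ ·)]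
    (a b d : G) (x y : G) :
    (a, b) = bmul (x, y) (d, b) ↔ ble (a, d) (x, y) := by
  rw [eq_bmul_iff, ble_iff, and_congr_right_iff]
  intro h
  rw [inv_mul_eq_inv_mul_iff_eq_mul_inv_mul.mp h, le_mul_iff_one_le_left', le_mul_inv_iff_le]

/-- Proposition 2.2(ii): `(a,b) = (x,y)·(d,b)` in `𝓑(G)` iff `(a,d) ≼ (x,y)`. -/
theorem eq_right_factor_iff {G : Type*} [Group G] [LinearOrder G]
    [CovariantClass G G (· * ·) (· ≤ ·)]
    [CovariantClass G G (Function.swap (· * ·)) (· ≤ ·)]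
    (a b d : G) (x y : G) :
    (a, b) = bmul (x, y) (d, b) ↔ ble (a, d) (x, y) :=
  eq_right_factor_iff_general a b d x y
end

section
/- Let G be a linearly ordered group and let (a,b), (c,d) be elements of the semigroup 𝓑⁺(G). Then the following are equivalent: (i) (a,b) ≼ (c,d) in the natural partial order of 𝓑⁺(G); (ii) a⁻¹·b = c⁻¹·d and c ≤ a in G; (iii) b⁻¹·a = d⁻¹·c and d ≤ b in G. -/
/-- The natural partial order on `𝓑⁺(G)`: `s ≼ t` iff `s = e·t` for some idempotent
`e` of `𝓑⁺(G)`; the idempotents of `𝓑⁺(G)` are exactly the pairs `(x,x)` with `1 ≤ x`. -/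
def blePos {G : Type*} [Group G] [LinearOrder G] (s t : G × G) : Prop :=
  ∃ x : G, 1 ≤ x ∧ bmul (x, x) t = s

/-- Lemma 2.4: for a linearly ordered group `G` and `(a,b), (c,d) ∈ 𝓑⁺(G)`, the
following are equivalent: (i) `(a,b) ≼ (c,d)` in `𝓑⁺(G)`; (ii) `a⁻¹·b = c⁻¹·d` and
`c ≤ a`; (iii) `b⁻¹·a = d⁻¹·c` and `d ≤ b`. -/
theorem natural_order_pos_iff {G : Type*} [Group G] [LinearOrder G]
    [CovariantClass G G (· * ·) (· ≤ ·)]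
    [CovariantClass G G (Function.swap (· * ·)) (· ≤ ·)]
    (a b c d : G) (ha : 1 ≤ a) (hb : 1 ≤ b) (hc : 1 ≤ c) (hd : 1 ≤ d) :
    (blePos (a, b) (c, d) ↔ a⁻¹ * b = c⁻¹ * d ∧ c ≤ a) ∧
    (blePos (a, b) (c, d) ↔ b⁻¹ * a = d⁻¹ * c ∧ d ≤ b) := by
  have key : blePos (a, b) (c, d) ↔ a⁻¹ * b = c⁻¹ * d ∧ c ≤ a := by
    constructor
    · rintro ⟨x, hx, heq⟩
      simp only [bmul] at heq
      split_ifs at heq with h1 h2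
      · rw [Prod.mk.injEq] at heq
        obtain ⟨h₁, h₂⟩ := heq
        have hac : a = c := by rw [← h₁]; group
        have hbd : b = d := h₂.symm
        subst hac; subst hbd
        exact ⟨rfl, le_refl _⟩
      · rw [Prod.mk.injEq] at heq
        obtain ⟨h₁, h₂⟩ := heq
        have hac : a = c := by rw [← h₁, h2]
        have hbd : b = d := h₂.symm
        subst hac; subst hbd
        exact ⟨rfl, le_refl _⟩
      · rw [Prod.mk.injEq] at heq
        obtain ⟨h₁, h₂⟩ := heq
        have hca : c < x := (not_lt.mp h1).lt_of_ne (Ne.symm h2)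
        subst h₁
        constructor
        · rw [← h₂]; group
        · exact le_of_lt hca
    · rintro ⟨h, hca⟩
      refine ⟨a, ha, ?_⟩
      simp only [bmul]
      rcases eq_or_lt_of_le hca with rfl | hlt
      · have hbd : b = d := by
          have := h
          rwa [mul_left_cancel_iff] at this
        simp [hbd]
      · rw [if_neg (not_lt.mpr (le_of_lt hlt)), if_neg (ne_of_gt hlt)]
        have hbeq : a * c⁻¹ * d = b := by
          rw [mul_assoc, ← h]; group
        rw [hbeq]
  refine ⟨key, key.trans ?_⟩
  constructor
  · rintro ⟨h, hca⟩
    have h' : b⁻¹ * a = d⁻¹ * c := by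
      have := congrArg (·⁻¹) h
      simpa [mul_inv_rev] using this
    refine ⟨h', ?_⟩
    have hb' : b = a * (c⁻¹ * d) := by rw [← h]; group
    calc d = c * (c⁻¹ * d) := by group
      _ ≤ a * (c⁻¹ * d) := mul_le_mul_left hca _
      _ = b := hb'.symm
  · rintro ⟨h, hdb⟩
    have h' : a⁻¹ * b = c⁻¹ * d := by
      have := congrArg (·⁻¹) h
      simpa [mul_inv_rev] using this
    refine ⟨h', ?_⟩
    have ha' : a = b * (d⁻¹ * c) := by rw [← h]; group
    calc c = d * (d⁻¹ * c) := by group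
      _ ≤ b * (d⁻¹ * c) := mul_le_mul_left hdb _
      _ = a := ha'.symm
end

section
/- Let G be a linearly ordered group and let a, b, c, d be elements of the positive cone of G (i.e., 1 ≤ a, b, c, d). Then for (x,y) ∈ 𝓑⁺(G): (i) (a,b) = (a,c)·(x,y) if and only if (c,b) ≼ (x,y) in 𝓑⁺(G); (ii) (a,b) = (x,y)·(d,b) if and only if (a,d) ≼ (x,y) in 𝓑⁺(G); (iii) (a,b) = (a,c)·(x,y)·(d,b) if and only if (c,d) ≼ (x,y) in 𝓑⁺(G). -/
lemma blePos_iff {G : Type*} [Group G] [LinearOrder G]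
    (c b x y : G) (hx : 1 ≤ x) :
    blePos (c, b) (x, y) ↔ x ≤ c ∧ b = c * x⁻¹ * y := by
  constructor
  · rintro ⟨z, hz, h⟩
    unfold bmul at h
    simp only at h
    rcases lt_trichotomy z x with h1 | h1 | h1
    · rw [if_pos h1] at h
      obtain ⟨h2, h3⟩ := Prod.mk.injEq .. ▸ h
      have hcx : c = x := by rw [← h2]; group
      subst hcx
      simp [← h3]
    · subst h1
      rw [if_neg (lt_irrefl _), if_pos rfl] at h
      obtain ⟨h2, h3⟩ := Prod.mk.injEq .. ▸ h
      subst h2; subst h3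
      simp
    · rw [if_neg (asymm h1), if_neg (ne_of_gt h1)] at h
      obtain ⟨h2, h3⟩ := Prod.mk.injEq .. ▸ h
      subst h2
      exact ⟨le_of_lt h1, h3.symm⟩
  · rintro ⟨h1, h2⟩
    refine ⟨c, le_trans hx h1, ?_⟩
    unfold bmul
    simp only
    rcases eq_or_lt_of_le h1 with h3 | h3
    · subst h3
      rw [if_neg (lt_irrefl x), if_pos rfl]
      simp [h2]
    · rw [if_neg (asymm h3), if_neg (ne_of_gt h3), h2]

lemma eq_one_of_self_eq_mul {G : Type*} [Group G] {u v : G} (h : v = u * v) : u = 1 :=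
  mul_right_cancel (b := v) (by rw [one_mul, ← h])

/-- Proposition 2.5: for `a,b,c,d` in the positive cone of `G` and `(x,y) ∈ 𝓑⁺(G)`:
(i) `(a,b) = (a,c)·(x,y)` iff `(c,b) ≼ (x,y)` in `𝓑⁺(G)`;
(ii) `(a,b) = (x,y)·(d,b)` iff `(a,d) ≼ (x,y)` in `𝓑⁺(G)`;
(iii) `(a,b) = (a,c)·(x,y)·(d,b)` iff `(c,d) ≼ (x,y)` in `𝓑⁺(G)`. -/
theorem eq_factor_pos_iff {G : Type*} [Group G] [LinearOrder G]
    [CovariantClass G G (· * ·) (· ≤ ·)]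
    [CovariantClass G G (Function.swap (· * ·)) (· ≤ ·)]
    (a b c d : G) (ha : 1 ≤ a) (hb : 1 ≤ b) (hc : 1 ≤ c) (hd : 1 ≤ d)
    (x y : G) (hx : 1 ≤ x) (hy : 1 ≤ y) :
    ((a, b) = bmul (a, c) (x, y) ↔ blePos (c, b) (x, y)) ∧
    ((a, b) = bmul (x, y) (d, b) ↔ blePos (a, d) (x, y)) ∧
    ((a, b) = bmul (bmul (a, c) (x, y)) (d, b) ↔ blePos (c, d) (x, y)) := by
  rw [blePos_iff c b x y hx, blePos_iff a d x y hx, blePos_iff c d x y hx]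
  refine ⟨?_, ?_, ?_⟩
  · -- part (i)
    unfold bmul; simp only
    rcases lt_trichotomy c x with h1 | h1 | h1
    · rw [if_pos h1]
      constructor
      · intro h
        obtain ⟨h2, h3⟩ := Prod.mk.injEq .. ▸ h
        have h4 : x * c⁻¹ = 1 := eq_one_of_self_eq_mul h2
        have : x = c := by rwa [mul_inv_eq_one] at h4
        exact absurd this (ne_of_gt h1)
      · rintro ⟨h2, _⟩; exact absurd h1 (not_lt_of_ge h2)
    · subst h1
      rw [if_neg (lt_irrefl _), if_pos rfl]
      constructor
      · intro h
        obtain ⟨_, h3⟩ := Prod.mk.injEq .. ▸ h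
        exact ⟨le_refl _, by rw [h3]; group⟩
      · rintro ⟨_, h3⟩
        have : b = y := by rw [h3]; group
        rw [this]
    · rw [if_neg (asymm h1), if_neg (ne_of_gt h1)]
      constructor
      · intro h
        obtain ⟨_, h3⟩ := Prod.mk.injEq .. ▸ h
        exact ⟨le_of_lt h1, h3⟩
      · rintro ⟨_, h3⟩; rw [← h3]
  · -- part (ii)
    unfold bmul; simp only
    rcases lt_trichotomy y d with h1 | h1 | h1
    · rw [if_pos h1]
      constructor
      · intro h
        obtain ⟨h2, _⟩ := Prod.mk.injEq .. ▸ h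
        refine ⟨?_, by rw [h2]; group⟩
        have h4 : (1:G) < d * y⁻¹ := by rwa [← div_eq_mul_inv, one_lt_div']
        calc x = 1 * x := (one_mul x).symm
        _ ≤ d * y⁻¹ * x := mul_le_mul_left (le_of_lt h4) x
        _ = a := h2.symm
      · rintro ⟨h2, h3⟩
        have : a = d * y⁻¹ * x := by rw [h3]; group
        rw [this]
    · subst h1
      rw [if_neg (lt_irrefl _), if_pos rfl]
      constructor
      · intro h
        obtain ⟨h2, _⟩ := Prod.mk.injEq .. ▸ h
        exact ⟨le_of_eq h2.symm, by rw [h2]; group⟩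
      · rintro ⟨h2, h3⟩
        have h4 : a * x⁻¹ = 1 :=
          eq_one_of_self_eq_mul h3
        have : a = x := by rwa [mul_inv_eq_one] at h4
        rw [this]
    · rw [if_neg (asymm h1), if_neg (ne_of_gt h1)]
      constructor
      · intro h
        obtain ⟨_, h3⟩ := Prod.mk.injEq .. ▸ h
        exfalso
        have h4 : y * d⁻¹ = 1 :=
          eq_one_of_self_eq_mul h3
        have : y = d := by rwa [mul_inv_eq_one] at h4
        exact absurd this (ne_of_gt h1)
      · rintro ⟨h2, h3⟩
        exfalso
        have h5 : (1:G) ≤ a * x⁻¹ := by rwa [← div_eq_mul_inv, one_le_div']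
        have h4 : y ≤ d := by
          rw [h3]
          calc y = 1 * y := (one_mul y).symm
          _ ≤ a * x⁻¹ * y := mul_le_mul_left h5 y
        exact absurd h4 (not_le_of_gt h1)
  · -- part (iii)
    unfold bmul; simp only
    rcases lt_trichotomy c x with h1 | h1 | h1
    · rw [if_pos h1]; simp only
      constructor
      · intro h
        exfalso
        rcases lt_trichotomy y d with h2 | h2 | h2
        · rw [if_pos h2] at h
          obtain ⟨h3, _⟩ := Prod.mk.injEq .. ▸ h
          -- a = d * y⁻¹ * (x * c⁻¹ * a)
          have h4 : d * y⁻¹ * (x * c⁻¹) = 1 := eq_one_of_self_eq_mul (by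
            rw [← mul_assoc] at h3; exact h3)
          have h5 : x * c⁻¹ ≤ 1 := by
            have h6 : (1:G) < d * y⁻¹ := by rwa [← div_eq_mul_inv, one_lt_div']
            by_contra h7
            push_neg at h7
            have := mul_lt_mul_of_lt_of_lt h6 h7
            rw [h4, mul_one] at this
            exact lt_irrefl _ this
          have h8 : x ≤ c := by rwa [← div_eq_mul_inv, div_le_one'] at h5
          exact absurd h1 (not_lt_of_ge h8)
        · rw [if_neg (lt_irrefl _ ∘ (h2 ▸ ·)), if_pos h2] at h
          obtain ⟨h3, _⟩ := Prod.mk.injEq .. ▸ h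
          have h4 : x * c⁻¹ = 1 :=
            eq_one_of_self_eq_mul h3
          have : x = c := by rwa [mul_inv_eq_one] at h4
          exact absurd this (ne_of_gt h1)
        · rw [if_neg (asymm h2), if_neg (ne_of_gt h2)] at h
          obtain ⟨h3, _⟩ := Prod.mk.injEq .. ▸ h
          have h4 : x * c⁻¹ = 1 :=
            eq_one_of_self_eq_mul h3
          have : x = c := by rwa [mul_inv_eq_one] at h4
          exact absurd this (ne_of_gt h1)
      · rintro ⟨h2, _⟩; exact absurd h1 (not_lt_of_ge h2)
    · subst h1
      rw [if_neg (lt_irrefl _), if_pos rfl]; simp only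
      constructor
      · intro h
        refine ⟨le_refl _, ?_⟩
        rcases lt_trichotomy y d with h2 | h2 | h2
        · rw [if_pos h2] at h
          obtain ⟨h3, _⟩ := Prod.mk.injEq .. ▸ h
          exfalso
          have h4 : d * y⁻¹ = 1 :=
            eq_one_of_self_eq_mul h3
          have : d = y := by rwa [mul_inv_eq_one] at h4
          exact absurd this.symm (ne_of_lt h2)
        · rw [if_neg (lt_irrefl _ ∘ (h2 ▸ ·)), if_pos h2] at h
          rw [← h2]; group
        · rw [if_neg (asymm h2), if_neg (ne_of_gt h2)] at h
          obtain ⟨_, h3⟩ := Prod.mk.injEq .. ▸ h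
          exfalso
          have h4 : y * d⁻¹ = 1 :=
            eq_one_of_self_eq_mul h3
          have : y = d := by rwa [mul_inv_eq_one] at h4
          exact absurd this (ne_of_gt h2)
      · rintro ⟨_, h3⟩
        have h4 : d = y := by rw [h3]; group
        subst h4
        rw [if_neg (lt_irrefl _), if_pos rfl]
    · rw [if_neg (asymm h1), if_neg (ne_of_gt h1)]; simp only
      constructor
      · intro h
        refine ⟨le_of_lt h1, ?_⟩
        rcases lt_trichotomy (c * x⁻¹ * y) d with h2 | h2 | h2
        · rw [if_pos h2] at h
          obtain ⟨h3, _⟩ := Prod.mk.injEq .. ▸ h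
          exfalso
          have h4 : d * (c * x⁻¹ * y)⁻¹ = 1 :=
            eq_one_of_self_eq_mul h3
          have : d = c * x⁻¹ * y := by rwa [mul_inv_eq_one] at h4
          exact absurd this.symm (ne_of_lt h2)
        · rw [if_neg (lt_irrefl _ ∘ (h2 ▸ ·)), if_pos h2] at h
          exact h2.symm
        · rw [if_neg (asymm h2), if_neg (ne_of_gt h2)] at h
          obtain ⟨_, h3⟩ := Prod.mk.injEq .. ▸ h
          exfalso
          have h4 : (c * x⁻¹ * y) * d⁻¹ = 1 :=
            eq_one_of_self_eq_mul h3
          have : c * x⁻¹ * y = d := by rwa [mul_inv_eq_one] at h4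
          exact absurd this (ne_of_gt h2)
      · rintro ⟨_, h3⟩
        rw [← h3, if_neg (lt_irrefl _), if_pos rfl]
end

section
/- Let G be a linearly ordered group and let a, b, c, d be elements of the positive cone of G (i.e., 1 ≤ a, b, c, d). Then: (i) if a < c, the equation (a,b) = (c,d)·(x,y) has no solution (x,y) in 𝓑⁺(G); (ii) if a > c, the equation (a,b) = (c,d)·(x,y) has the unique solution (x,y) = (a·c⁻¹·d, b) in 𝓑⁺(G); (iii) if b < d, the equation (a,b) = (x,y)·(c,d) has no solution (x,y) in 𝓑⁺(G); (iv) if b > d, the equation (a,b) = (x,y)·(c,d) has the unique solution (x,y) = (a, b·d⁻¹·c) in 𝓑⁺(G). -/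
section

variable {G : Type*} [Group G] [LinearOrder G]

theorem bmul_of_lt {s t : G × G} (h : s.2 < t.1) : bmul s t = (t.1 * s.2⁻¹ * s.1, t.2) :=
  if_pos h

theorem bmul_of_gt {s t : G × G} (h : t.1 < s.2) : bmul s t = (s.1, s.2 * t.1⁻¹ * t.2) := by
  rw [bmul, if_neg h.not_gt, if_neg h.ne']

theorem bmul_fst_of_not_lt {s t : G × G} (h : ¬ s.2 < t.1) : (bmul s t).1 = s.1 := by
  unfold bmul; split_ifs <;> rfl

theorem bmul_snd_of_not_gt {s t : G × G} (h : ¬ t.1 < s.2) : (bmul s t).2 = t.2 := by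
  unfold bmul; split_ifs with h₁ h₂
  · rfl
  · rfl
  · exact absurd (lt_of_le_of_ne (not_lt.mp h₁) (Ne.symm h₂)) h

variable [MulRightMono G]

theorem fst_le_bmul_fst (s t : G × G) : s.1 ≤ (bmul s t).1 := by
  by_cases h : s.2 < t.1
  · rw [bmul_of_lt h]
    exact (lt_mul_of_one_lt_left' _ (lt_mul_inv_iff_lt.mpr h)).le
  · rw [bmul_fst_of_not_lt h]

theorem snd_le_bmul_snd (s t : G × G) : t.2 ≤ (bmul s t).2 := by
  by_cases h : t.1 < s.2
  · rw [bmul_of_gt h]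
    exact (lt_mul_of_one_lt_left' _ (lt_mul_inv_iff_lt.mpr h)).le
  · rw [bmul_snd_of_not_gt h]

theorem eq_bmul_left_iff {a b c d x y : G} (hca : c < a) :
    (a, b) = bmul (c, d) (x, y) ↔ x = a * c⁻¹ * d ∧ y = b := by
  constructor
  · intro h
    by_cases hdx : d < x
    · rw [bmul_of_lt hdx, Prod.mk.injEq] at h
      obtain ⟨rfl, rfl⟩ := h
      exact ⟨by group, rfl⟩
    · have hac := bmul_fst_of_not_lt (s := (c, d)) (t := (x, y)) hdx
      rw [← h] at hac
      exact absurd hac hca.ne'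
  · rintro ⟨rfl, rfl⟩
    have hdx : d < a * c⁻¹ * d := lt_mul_of_one_lt_left' d (lt_mul_inv_iff_lt.mpr hca)
    rw [bmul_of_lt hdx, Prod.mk.injEq]
    exact ⟨by group, rfl⟩

theorem eq_bmul_right_iff {a b c d x y : G} (hdb : d < b) :
    (a, b) = bmul (x, y) (c, d) ↔ x = a ∧ y = b * d⁻¹ * c := by
  constructor
  · intro h
    by_cases hcy : c < y
    · rw [bmul_of_gt hcy, Prod.mk.injEq] at h
      obtain ⟨rfl, rfl⟩ := h
      exact ⟨rfl, by group⟩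
    · have hbd := bmul_snd_of_not_gt (s := (x, y)) (t := (c, d)) hcy
      rw [← h] at hbd
      exact absurd hbd hdb.ne'
  · rintro ⟨rfl, rfl⟩
    have hcy : c < b * d⁻¹ * c := lt_mul_of_one_lt_left' c (lt_mul_inv_iff_lt.mpr hdb)
    rw [bmul_of_gt hcy, Prod.mk.injEq]
    exact ⟨rfl, by group⟩

end

theorem solutions_pos_general {G : Type*} [Group G] [LinearOrder G]
    [CovariantClass G G (Function.swap (· * ·)) (· ≤ ·)]
    (a b c d : G) (hc : 1 ≤ c) (hd : 1 ≤ d) :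
    (a < c → ∀ x y : G, 1 ≤ x → 1 ≤ y → (a, b) ≠ bmul (c, d) (x, y)) ∧
    (c < a → 1 ≤ a * c⁻¹ * d ∧
      ∀ x y : G, 1 ≤ x → 1 ≤ y →
        ((a, b) = bmul (c, d) (x, y) ↔ x = a * c⁻¹ * d ∧ y = b)) ∧
    (b < d → ∀ x y : G, 1 ≤ x → 1 ≤ y → (a, b) ≠ bmul (x, y) (c, d)) ∧
    (d < b → 1 ≤ b * d⁻¹ * c ∧
      ∀ x y : G, 1 ≤ x → 1 ≤ y →
        ((a, b) = bmul (x, y) (c, d) ↔ x = a ∧ y = b * d⁻¹ * c)) := by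
  refine ⟨fun hac x y _ _ h => ?_, fun hca => ⟨?_, fun x y _ _ => eq_bmul_left_iff hca⟩,
    fun hbd x y _ _ h => ?_, fun hdb => ⟨?_, fun x y _ _ => eq_bmul_right_iff hdb⟩⟩
  · have hca := fst_le_bmul_fst (c, d) (x, y)
    rw [← h] at hca
    exact hac.not_ge hca
  · exact Right.one_le_mul (lt_mul_inv_iff_lt.mpr hca).le hd
  · have hdb := snd_le_bmul_snd (x, y) (c, d)
    rw [← h] at hdb
    exact hbd.not_ge hdb
  · exact Right.one_le_mul (lt_mul_inv_iff_lt.mpr hdb).le hc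

/-- Proposition 2.6: for `a,b,c,d` in the positive cone of `G`:
(i) if `a < c` the equation `(a,b) = (c,d)·(x,y)` has no solutions in `𝓑⁺(G)`;
(ii) if `a > c` it has the unique solution `(x,y) = (a·c⁻¹·d, b)` in `𝓑⁺(G)`;
(iii) if `b < d` the equation `(a,b) = (x,y)·(c,d)` has no solutions in `𝓑⁺(G)`;
(iv) if `b > d` it has the unique solution `(x,y) = (a, b·d⁻¹·c)` in `𝓑⁺(G)`. -/
theorem solutions_pos {G : Type*} [Group G] [LinearOrder G]
    [CovariantClass G G (· * ·) (· ≤ ·)]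
    [CovariantClass G G (Function.swap (· * ·)) (· ≤ ·)]
    (a b c d : G) (ha : 1 ≤ a) (hb : 1 ≤ b) (hc : 1 ≤ c) (hd : 1 ≤ d) :
    (a < c → ∀ x y : G, 1 ≤ x → 1 ≤ y → (a, b) ≠ bmul (c, d) (x, y)) ∧
    (c < a → 1 ≤ a * c⁻¹ * d ∧
      ∀ x y : G, 1 ≤ x → 1 ≤ y →
        ((a, b) = bmul (c, d) (x, y) ↔ x = a * c⁻¹ * d ∧ y = b)) ∧
    (b < d → ∀ x y : G, 1 ≤ x → 1 ≤ y → (a, b) ≠ bmul (x, y) (c, d)) ∧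
    (d < b → 1 ≤ b * d⁻¹ * c ∧
      ∀ x y : G, 1 ≤ x → 1 ≤ y →
        ((a, b) = bmul (x, y) (c, d) ↔ x = a ∧ y = b * d⁻¹ * c)) :=
  solutions_pos_general a b c d hc hd
end

section
/- Let G be a linearly ordered group and let a ∈ G. Then the right principal ideal (a,a)·𝓑(G) equals {(x,y) ∈ 𝓑(G) : a ≤ x in G}, and the left principal ideal 𝓑(G)·(a,a) equals {(x,y) ∈ 𝓑(G) : a ≤ y in G}. -/
/-- Proposition 2.7 (i), (iii): in `𝓑(G)`, `(a,a)·𝓑(G) = {(x,y) : a ≤ x}` and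
`𝓑(G)·(a,a) = {(x,y) : a ≤ y}`. -/
theorem principal_ideals {G : Type*} [Group G] [LinearOrder G]
    [CovariantClass G G (· * ·) (· ≤ ·)]
    [CovariantClass G G (Function.swap (· * ·)) (· ≤ ·)]
    (a : G) :
    {p : G × G | ∃ t : G × G, p = bmul (a, a) t} = {p : G × G | a ≤ p.1} ∧
    {p : G × G | ∃ t : G × G, p = bmul t (a, a)} = {p : G × G | a ≤ p.2} := by
  constructor
  · ext p
    simp only [Set.mem_setOf_eq]
    constructor
    · rintro ⟨⟨c, d⟩, heq⟩
      rw [heq]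
      simp only [bmul]
      split_ifs with h1 h2 <;> simp
      · exact h1.le
    · intro h
      obtain ⟨x, y⟩ := p
      simp only at h
      refine ⟨(x, y), ?_⟩
      simp only [bmul]
      rcases lt_or_eq_of_le h with h' | h'
      · rw [if_pos h']
        simp
      · rw [if_neg (by simp [← h']), if_pos h', h']
  · ext p
    simp only [Set.mem_setOf_eq]
    constructor
    · rintro ⟨⟨c, d⟩, heq⟩
      rw [heq]
      simp only [bmul]
      split_ifs with h1 h2 <;> simp
      exact (lt_of_le_of_ne (not_lt.1 h1) (Ne.symm h2)).le
    · intro h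
      obtain ⟨x, y⟩ := p
      simp only at h
      refine ⟨(x, y), ?_⟩
      simp only [bmul]
      rcases lt_or_eq_of_le h with h' | h'
      · rw [if_neg (not_lt.2 h'.le), if_neg h'.ne']
        simp
      · rw [if_neg (by simp [← h']), if_pos h'.symm, ← h']
end

section
/- Let G be a linearly ordered group and let a be an element of the positive cone of G (i.e., 1 ≤ a). Then the right principal ideal (a,a)·𝓑⁺(G) equals {(x,y) ∈ 𝓑⁺(G) : a ≤ x in G}, and the left principal ideal 𝓑⁺(G)·(a,a) equals {(x,y) ∈ 𝓑⁺(G) : a ≤ y in G}. -/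
/-- Proposition 2.7 (ii), (iv): in `𝓑⁺(G)`, for `a` in the positive cone,
`(a,a)·𝓑⁺(G) = {(x,y) ∈ 𝓑⁺(G) : a ≤ x}` and `𝓑⁺(G)·(a,a) = {(x,y) ∈ 𝓑⁺(G) : a ≤ y}`. -/
theorem principal_ideals_pos {G : Type*} [Group G] [LinearOrder G]
    [CovariantClass G G (· * ·) (· ≤ ·)]
    [CovariantClass G G (Function.swap (· * ·)) (· ≤ ·)]
    (a : G) (ha : 1 ≤ a) :
    {p : G × G | ∃ t : G × G, 1 ≤ t.1 ∧ 1 ≤ t.2 ∧ p = bmul (a, a) t} =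
      {p : G × G | (1 ≤ p.1 ∧ 1 ≤ p.2) ∧ a ≤ p.1} ∧
    {p : G × G | ∃ t : G × G, 1 ≤ t.1 ∧ 1 ≤ t.2 ∧ p = bmul t (a, a)} =
      {p : G × G | (1 ≤ p.1 ∧ 1 ≤ p.2) ∧ a ≤ p.2} := by
  constructor
  · ext ⟨x, y⟩
    simp only [Set.mem_setOf_eq]
    constructor
    · rintro ⟨⟨c, d⟩, hc, hd, h⟩
      simp only [bmul] at h
      split_ifs at h with h1 h2
      · obtain ⟨hx, hy⟩ := Prod.mk.injEq .. ▸ h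
        rw [hx, hy]
        simp only [mul_assoc, inv_mul_cancel, mul_one]
        exact ⟨⟨le_trans ha h1.le, hd⟩, h1.le⟩
      · obtain ⟨hx, hy⟩ := Prod.mk.injEq .. ▸ h
        rw [hx, hy]
        exact ⟨⟨ha, hd⟩, le_refl _⟩
      · obtain ⟨hx, hy⟩ := Prod.mk.injEq .. ▸ h
        rw [hx, hy]
        push_neg at h1
        refine ⟨⟨ha, ?_⟩, le_refl _⟩
        have h3 : (1:G) ≤ a * c⁻¹ := by
          rw [← mul_inv_cancel c]
          exact mul_le_mul_left h1 c⁻¹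
        calc (1:G) ≤ d := hd
          _ = 1 * d := (one_mul d).symm
          _ ≤ a * c⁻¹ * d := mul_le_mul_left h3 d
    · rintro ⟨⟨hx, hy⟩, hax⟩
      refine ⟨(x, y), le_trans ha hax, hy, ?_⟩
      simp only [bmul]
      rcases lt_or_eq_of_le hax with h | h
      · rw [if_pos h]
        simp [mul_assoc]
      · rw [if_neg (by simp [h]), if_pos h]
        simp [h]
  · ext ⟨x, y⟩
    simp only [Set.mem_setOf_eq]
    constructor
    · rintro ⟨⟨c, d⟩, hc, hd, h⟩
      simp only [bmul] at h
      split_ifs at h with h1 h2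
      · obtain ⟨hx, hy⟩ := Prod.mk.injEq .. ▸ h
        rw [hx, hy]
        refine ⟨⟨?_, ha⟩, le_refl _⟩
        have h3 : (1:G) ≤ a * d⁻¹ := by
          rw [← mul_inv_cancel d]
          exact mul_le_mul_left h1.le d⁻¹
        calc (1:G) ≤ c := hc
          _ = 1 * c := (one_mul c).symm
          _ ≤ a * d⁻¹ * c := mul_le_mul_left h3 c
      · obtain ⟨hx, hy⟩ := Prod.mk.injEq .. ▸ h
        rw [hx, hy]
        exact ⟨⟨hc, ha⟩, le_refl _⟩
      · obtain ⟨hx, hy⟩ := Prod.mk.injEq .. ▸ h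
        rw [hx, hy]
        push_neg at h1
        simp only [mul_assoc, inv_mul_cancel, mul_one]
        exact ⟨⟨hc, le_trans ha h1⟩, h1⟩
    · rintro ⟨⟨hx, hy⟩, hay⟩
      refine ⟨(x, y), hx, le_trans ha hay, ?_⟩
      simp only [bmul]
      rcases lt_or_eq_of_le hay with h | h
      · rw [if_neg (not_lt.mpr h.le), if_neg (ne_of_gt h)]
        simp [mul_assoc]
      · rw [if_neg (by simp [h]), if_pos h.symm]
        simp [h]
end

section
/- Let G be a countable linearly ordered group and let τ be a T1 topology on 𝓑(G) such that (𝓑(G), τ) is a Baire space and for every s ∈ 𝓑(G) the left translation x ↦ s·x and the right translation x ↦ x·s are continuous. Then the topological space (𝓑(G), τ) is discrete. -/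
theorem BaireSpace.exists_isOpen_singleton {X : Type*} [TopologicalSpace X] [BaireSpace X]
    [T1Space X] [Countable X] [Nonempty X] : ∃ x : X, IsOpen ({x} : Set X) := by
  obtain ⟨x, hx⟩ := nonempty_interior_of_iUnion_of_closed (fun x : X => isClosed_singleton)
    (Set.iUnion_of_singleton X)
  have : interior ({x} : Set X) = {x} := hx.subset_singleton_iff.mp interior_subset
  exact ⟨x, this ▸ isOpen_interior⟩

theorem exists_lt_of_nontrivial {G : Type*} [Group G] [LinearOrder G] [MulRightMono G]
    [Nontrivial G] (p : G) : ∃ a, a < p := by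
  obtain ⟨g, hg⟩ := exists_ne (1 : G)
  rcases hg.lt_or_gt with hg | hg
  · exact ⟨g * p, by simpa using mul_lt_mul_left hg p⟩
  · exact ⟨g⁻¹ * p, by simpa using mul_lt_mul_left (Right.inv_lt_one_iff.mpr hg) p⟩

section Translations

variable {G : Type*} [Group G] [LinearOrder G] [MulRightMono G]

theorem preimage_bmul_left_singleton {a p : G} (ha : a < p) (b q : G) :
    bmul (a, b) ⁻¹' {(p, q)} = {(p * a⁻¹ * b, q)} := by
  have hb : b < p * a⁻¹ * b := lt_mul_of_one_lt_left' b (lt_mul_inv_iff_lt.mpr ha)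
  ext ⟨x₁, x₂⟩
  simp only [Set.mem_preimage, Set.mem_singleton_iff, bmul, Prod.mk.injEq]
  split_ifs with hlt heq
  · constructor <;> rintro ⟨rfl, rfl⟩ <;> simp
  · subst heq
    simp [ha.ne, hb.ne]
  · have : x₁ ≠ p * a⁻¹ * b := by
      intro h
      exact hlt (h ▸ hb)
    simp [ha.ne, this]

theorem preimage_bmul_right_singleton {d q : G} (hd : d < q) (c p : G) :
    (fun x => bmul x (c, d)) ⁻¹' {(p, q)} = {(p, q * d⁻¹ * c)} := by
  have hc : c < q * d⁻¹ * c := lt_mul_of_one_lt_left' c (lt_mul_inv_iff_lt.mpr hd)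
  ext ⟨x₁, x₂⟩
  simp only [Set.mem_preimage, Set.mem_singleton_iff, bmul, Prod.mk.injEq]
  split_ifs with hlt heq
  · have : x₂ ≠ q * d⁻¹ * c := by
      rintro rfl
      exact hlt.not_gt hc
    simp [hd.ne, this]
  · subst heq
    simp [hd.ne, hc.ne]
  · constructor <;> rintro ⟨rfl, rfl⟩ <;> simp

theorem isOpen_singleton_of_isOpen_singleton [Nontrivial G] [TopologicalSpace (G × G)]
    (hl : ∀ s : G × G, Continuous fun x : G × G => bmul s x)
    (hr : ∀ s : G × G, Continuous fun x : G × G => bmul x s)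
    {p q : G} (hpq : IsOpen {(p, q)}) (u v : G) : IsOpen {(u, v)} := by
  obtain ⟨a, ha⟩ := exists_lt_of_nontrivial p
  obtain ⟨d, hd⟩ := exists_lt_of_nontrivial q
  have huq : IsOpen {(u, q)} := by
    have hu : p * a⁻¹ * (a * p⁻¹ * u) = u := by group
    simpa [preimage_bmul_left_singleton ha, hu] using hpq.preimage (hl (a, a * p⁻¹ * u))
  have hv : q * d⁻¹ * (d * q⁻¹ * v) = v := by group
  simpa [preimage_bmul_right_singleton hd, hv] using huq.preimage (hr (d * q⁻¹ * v, d))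

end Translations

theorem baire_t1_implies_discrete_general {G : Type*} [Group G] [LinearOrder G]
    [CovariantClass G G (Function.swap (· * ·)) (· ≤ ·)]
    [Countable G]
    [TopologicalSpace (G × G)] [T1Space (G × G)] [BaireSpace (G × G)]
    (hl : ∀ s : G × G, Continuous fun x : G × G => bmul s x)
    (hr : ∀ s : G × G, Continuous fun x : G × G => bmul x s) :
    DiscreteTopology (G × G) := by
  cases subsingleton_or_nontrivial G
  · infer_instance
  obtain ⟨⟨p, q⟩, hpq⟩ := BaireSpace.exists_isOpen_singleton (X := G × G)
  exact discreteTopology_iff_isOpen_singleton.mpr fun ⟨u, v⟩ =>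
    isOpen_singleton_of_isOpen_singleton hl hr hpq u v

/-- Theorem 3.2 for `𝓑(G)`: for a countable linearly ordered group `G`, every Baire
`T₁`-topology on `𝓑(G)` with separately continuous multiplication is discrete. -/
theorem baire_t1_implies_discrete {G : Type*} [Group G] [LinearOrder G]
    [CovariantClass G G (· * ·) (· ≤ ·)]
    [CovariantClass G G (Function.swap (· * ·)) (· ≤ ·)]
    [Countable G]
    [TopologicalSpace (G × G)] [T1Space (G × G)] [BaireSpace (G × G)]
    (hl : ∀ s : G × G, Continuous fun x : G × G => bmul s x)
    (hr : ∀ s : G × G, Continuous fun x : G × G => bmul x s) :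
    DiscreteTopology (G × G) :=
  baire_t1_implies_discrete_general hl hr
end

section
/- Let G be a countable linearly ordered group and let τ be a locally compact Hausdorff topology on 𝓑(G) such that for every s ∈ 𝓑(G) the left translation x ↦ s·x and the right translation x ↦ x·s are continuous. Then the topological space (𝓑(G), τ) is discrete. -/
open Set

theorem exists_isOpen_singleton_of_countable (X : Type*) [TopologicalSpace X] [BaireSpace X]
    [T1Space X] [Countable X] [Nonempty X] : ∃ x : X, IsOpen ({x} : Set X) := by
  obtain ⟨x, hx⟩ := nonempty_interior_of_iUnion_of_closed (fun x : X => isClosed_singleton)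
    (iUnion_of_singleton X)
  exact ⟨x, hx.subset_singleton_iff.mp interior_subset ▸ isOpen_interior⟩

theorem discreteTopology_of_isOpen_singleton_preimage {X Y : Type*} [TopologicalSpace X]
    [TopologicalSpace Y] {y : Y} (hy : IsOpen ({y} : Set Y))
    (h : ∀ x : X, ∃ f : X → Y, Continuous f ∧ f ⁻¹' {y} = {x}) : DiscreteTopology X :=
  discreteTopology_iff_isOpen_singleton.mpr fun x => by
    obtain ⟨f, hf, hfx⟩ := h x
    exact hfx ▸ hy.preimage hf

section Bicyclic

variable {G : Type*} [Group G] [LinearOrder G]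

theorem bmul_swap (s t : G × G) : (bmul s t).swap = bmul t.swap s.swap := by
  obtain ⟨a, b⟩ := s
  obtain ⟨c, d⟩ := t
  unfold bmul
  rcases lt_trichotomy b c with h | rfl | h
  · simp [h, h.not_gt, h.ne']
  · simp
  · simp [h, h.not_gt, h.ne']

variable [MulRightStrictMono G]

theorem exists_lt_of_nontrivial_s17 [Nontrivial G] (m : G) : ∃ a, a < m := by
  obtain ⟨g, hg⟩ := exists_ne (1 : G)
  rcases hg.lt_or_gt with h | h
  · exact ⟨g * m, mul_lt_of_lt_one_left' m h⟩
  · exact ⟨g⁻¹ * m, mul_lt_of_lt_one_left' m (Right.inv_lt_one_iff.mpr h)⟩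

theorem bmul_eq_iff_of_fst_lt {a m : G} (ham : a < m) (b n : G) (x : G × G) :
    bmul (a, b) x = (m, n) ↔ x = (m * a⁻¹ * b, n) := by
  obtain ⟨c, d⟩ := x
  have hb : b < m * a⁻¹ * b := lt_mul_of_one_lt_left' b (lt_mul_inv_iff_lt.mpr ham)
  unfold bmul
  split_ifs with hbc
  · simp only [Prod.mk.injEq]
    constructor <;> rintro ⟨rfl, rfl⟩ <;> simp [mul_assoc]
  -- for `b ≥ c` the first coordinate stays `a ≠ m`, while `c = m * a⁻¹ * b` would exceed `b`
  all_goals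
    simp only [Prod.mk.injEq, ham.ne, false_and, false_iff]
    rintro ⟨rfl, -⟩
    exact hbc hb

theorem bmul_eq_iff_of_snd_lt {d n : G} (hdn : d < n) (c m : G) (x : G × G) :
    bmul x (c, d) = (m, n) ↔ x = (m, n * d⁻¹ * c) := by
  rw [← Prod.swap_inj, bmul_swap, ← Prod.swap_inj (p := x)]
  exact bmul_eq_iff_of_fst_lt hdn c m x.swap

theorem preimage_bmul_bmul_singleton {a m d n : G} (ham : a < m) (hdn : d < n) (b c : G) :
    (fun x => bmul (bmul (a, b) x) (c, d)) ⁻¹' {(m, n)} = {(m * a⁻¹ * b, n * d⁻¹ * c)} := by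
  ext x
  simp only [mem_preimage, mem_singleton_iff, bmul_eq_iff_of_snd_lt hdn,
    bmul_eq_iff_of_fst_lt ham]

end Bicyclic

theorem locally_compact_implies_discrete_general {G : Type*} [Group G] [LinearOrder G]
    [CovariantClass G G (Function.swap (· * ·)) (· ≤ ·)]
    [Countable G]
    [TopologicalSpace (G × G)] [T2Space (G × G)] [WeaklyLocallyCompactSpace (G × G)]
    (hl : ∀ s : G × G, Continuous fun x : G × G => bmul s x)
    (hr : ∀ s : G × G, Continuous fun x : G × G => bmul x s) :
    DiscreteTopology (G × G) := by
  nontriviality G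
  obtain ⟨⟨m, n⟩, hmn⟩ := exists_isOpen_singleton_of_countable (G × G)
  obtain ⟨a, ham⟩ := exists_lt_of_nontrivial_s17 m
  obtain ⟨d, hdn⟩ := exists_lt_of_nontrivial_s17 n
  refine discreteTopology_of_isOpen_singleton_preimage hmn fun ⟨p, q⟩ =>
    ⟨fun x => bmul (bmul (a, a * m⁻¹ * p) x) (d * n⁻¹ * q, d), (hr _).comp (hl _), ?_⟩
  rw [preimage_bmul_bmul_singleton ham hdn]
  simp [mul_assoc]

/-- Corollary 3.3 for `𝓑(G)`: for a countable linearly ordered group `G`, every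
locally compact Hausdorff topology on `𝓑(G)` with separately continuous
multiplication is discrete. -/
theorem locally_compact_implies_discrete {G : Type*} [Group G] [LinearOrder G]
    [CovariantClass G G (· * ·) (· ≤ ·)]
    [CovariantClass G G (Function.swap (· * ·)) (· ≤ ·)]
    [Countable G]
    [TopologicalSpace (G × G)] [T2Space (G × G)] [WeaklyLocallyCompactSpace (G × G)]
    (hl : ∀ s : G × G, Continuous fun x : G × G => bmul s x)
    (hr : ∀ s : G × G, Continuous fun x : G × G => bmul x s) :
    DiscreteTopology (G × G) :=
  locally_compact_implies_discrete_general hl hr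
end

section
/- Let G be a linearly ordered group which is not densely ordered, and let τ be a Hausdorff topology on 𝓑(G) such that for every s ∈ 𝓑(G) the left translation x ↦ s·x and the right translation x ↦ x·s are continuous. Then the topological space (𝓑(G), τ) is discrete. -/
theorem lt_mul_iff_le_of_isLeast {G : Type*} [Group G] [LinearOrder G] [MulRightMono G]
    {u : G} (hu : IsLeast {h : G | 1 < h} u) {a c : G} : c < u * a ↔ c ≤ a := by
  refine ⟨fun h => not_lt.1 fun hac => h.not_ge ?_, fun h => h.trans_lt ?_⟩
  · exact le_mul_inv_iff_mul_le.1 (hu.2 (lt_mul_inv_iff_lt.2 hac))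
  · exact lt_mul_of_one_lt_left' a hu.1

section Bicyclic

variable {G : Type*} [Group G] [LinearOrder G]

theorem bmul_diag_left (g : G) (x : G × G) :
    bmul (g, g) x = if g ≤ x.1 then x else (g, g * x.1⁻¹ * x.2) := by
  obtain ⟨c, d⟩ := x
  unfold bmul
  rcases lt_trichotomy g c with h | rfl | h
  · simp [h, h.le]
  · simp
  · simp [h.not_ge, h.not_gt, h.ne']

theorem bmul_diag_right (g : G) (x : G × G) :
    bmul x (g, g) = if g ≤ x.2 then x else (g * x.2⁻¹ * x.1, g) := by
  obtain ⟨c, d⟩ := x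
  unfold bmul
  rcases lt_trichotomy d g with h | rfl | h
  · simp [h, h.not_ge]
  · simp
  · simp [h.le, h.not_gt, h.ne']

theorem bmul_diag_left_eq_self_iff {g : G} {x : G × G} : bmul (g, g) x = x ↔ g ≤ x.1 := by
  rw [bmul_diag_left]
  split_ifs with h
  · simp [h]
  · simp only [h, iff_false]
    intro he
    exact h (by rw [← he])

theorem bmul_diag_right_eq_self_iff {g : G} {x : G × G} : bmul x (g, g) = x ↔ g ≤ x.2 := by
  rw [bmul_diag_right]
  split_ifs with h
  · simp [h]
  · simp only [h, iff_false]
    intro he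
    exact h (by rw [← he])

theorem le_fst_bmul_diag_left (g : G) (x : G × G) : g ≤ (bmul (g, g) x).1 := by
  rw [bmul_diag_left]
  split_ifs with h
  exacts [h, le_rfl]

theorem le_snd_bmul_diag_right (g : G) (x : G × G) : g ≤ (bmul x (g, g)).2 := by
  rw [bmul_diag_right]
  split_ifs with h
  exacts [h, le_rfl]

section Ordered

variable [MulRightMono G]

theorem snd_lt_snd_bmul_diag_left {g : G} {x : G × G} (h : x.1 < g) :
    x.2 < (bmul (g, g) x).2 := by
  rw [bmul_diag_left, if_neg h.not_ge]
  exact lt_mul_of_one_lt_left' _ (lt_mul_inv_iff_lt.2 h)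

theorem snd_le_snd_bmul_diag_left (g : G) (x : G × G) : x.2 ≤ (bmul (g, g) x).2 := by
  by_cases h : g ≤ x.1
  · rw [bmul_diag_left, if_pos h]
  · exact (snd_lt_snd_bmul_diag_left (not_le.1 h)).le

theorem eq_of_bmul_diag_left_eq {a b : G} {y : G × G} (hy : b ≤ y.2)
    (h : bmul (a, a) y = (a, b)) : y = (a, b) := by
  by_cases ha : a ≤ y.1
  · rwa [bmul_diag_left, if_pos ha] at h
  · have := snd_lt_snd_bmul_diag_left (not_le.1 ha)
    rw [h] at this
    exact absurd hy this.not_ge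

theorem exists_le_one_of_bmul_diag_right_eq {a b : G} {x : G × G}
    (h : bmul x (b, b) = (a, b)) : ∃ t ≤ 1, x = (t * a, t * b) := by
  obtain ⟨c, d⟩ := x
  rw [bmul_diag_right] at h
  split_ifs at h with hd
  · exact ⟨1, le_rfl, by simpa using h⟩
  · refine ⟨d * b⁻¹, (mul_inv_lt_one_iff.2 (not_le.1 hd)).le, ?_⟩
    obtain ⟨rfl, -⟩ := Prod.mk.inj h
    simp [mul_assoc]

theorem exists_le_one_of_bmul_diag_bmul_diag_eq {a b : G} {x : G × G}
    (h : bmul (a, a) (bmul x (b, b)) = (a, b)) : ∃ t ≤ 1, x = (t * a, t * b) :=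
  exists_le_one_of_bmul_diag_right_eq (eq_of_bmul_diag_left_eq (le_snd_bmul_diag_right b x) h)

theorem bmul_diag_mul_of_le {s t : G} (hts : t ≤ s) (a b : G) :
    bmul (s * a, s * a) (t * a, t * b) = (s * a, s * b) := by
  rw [bmul_diag_left]
  rcases hts.lt_or_eq with h | rfl
  · rw [if_neg (mul_lt_mul_left h a).not_ge]
    simp [mul_assoc]
  · simp

theorem singleton_eq_inter_preimage {u : G} (hu : IsLeast {h : G | 1 < h} u) (a b : G) :
    {(a, b)} = (fun x => bmul (a, a) (bmul x (b, b))) ⁻¹' {p | p.1 ≤ a ∧ p.2 ≤ b} ∩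
      (fun x => bmul (u⁻¹ * a, u⁻¹ * a) x) ⁻¹' {(u⁻¹ * a, u⁻¹ * b)}ᶜ := by
  ext x
  simp only [Set.mem_singleton_iff, Set.mem_inter_iff, Set.mem_preimage,
    Set.mem_compl_iff]
  constructor
  · rintro rfl
    have hua : u⁻¹ * a < a := by
      simpa using (lt_mul_iff_le_of_isLeast hu (a := u⁻¹ * a)).2 le_rfl
    refine ⟨by simp [bmul], ?_⟩
    rw [bmul_diag_left_eq_self_iff.2 hua.le]
    simp [hua.ne']
  · rintro ⟨hE, hL⟩
    have hEeq : bmul (a, a) (bmul x (b, b)) = (a, b) :=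
      Prod.ext (le_antisymm hE.1 (le_fst_bmul_diag_left a _))
        (le_antisymm hE.2 ((le_snd_bmul_diag_right b x).trans (snd_le_snd_bmul_diag_left a _)))
    obtain ⟨t, ht, rfl⟩ := exists_le_one_of_bmul_diag_bmul_diag_eq hEeq
    rcases ht.lt_or_eq with ht | rfl
    · have htu : t ≤ u⁻¹ := (lt_mul_iff_le_of_isLeast hu).1 (by simpa using ht)
      exact absurd (bmul_diag_mul_of_le htu a b) hL
    · simp

end Ordered

variable [TopologicalSpace (G × G)] [T2Space (G × G)]

theorem isOpen_setOf_fst_lt (hl : ∀ s : G × G, Continuous fun x : G × G => bmul s x) (g : G) :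
    IsOpen {x : G × G | x.1 < g} := by
  have : {x : G × G | x.1 < g} = {x | bmul (g, g) x = x}ᶜ := by
    ext x
    simp [bmul_diag_left_eq_self_iff]
  exact this ▸ (isClosed_eq (hl _) continuous_id).isOpen_compl

theorem isOpen_setOf_snd_lt (hr : ∀ s : G × G, Continuous fun x : G × G => bmul x s) (g : G) :
    IsOpen {x : G × G | x.2 < g} := by
  have : {x : G × G | x.2 < g} = {x | bmul x (g, g) = x}ᶜ := by
    ext x
    simp [bmul_diag_right_eq_self_iff]
  exact this ▸ (isClosed_eq (hr _) continuous_id).isOpen_compl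

end Bicyclic

theorem not_densely_ordered_implies_discrete_general {G : Type*} [Group G] [LinearOrder G]
    [CovariantClass G G (Function.swap (· * ·)) (· ≤ ·)]
    (hnd : ¬ ∀ g : G, 1 < g → ∃ h : G, 1 < h ∧ h < g)
    [TopologicalSpace (G × G)] [T2Space (G × G)]
    (hl : ∀ s : G × G, Continuous fun x : G × G => bmul s x)
    (hr : ∀ s : G × G, Continuous fun x : G × G => bmul x s) :
    DiscreteTopology (G × G) := by
  obtain ⟨u, hu⟩ : ∃ u, IsLeast {h : G | 1 < h} u := by
    push Not at hnd
    exact hnd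
  rw [discreteTopology_iff_isOpen_singleton]
  rintro ⟨a, b⟩
  have hquad : IsOpen {p : G × G | p.1 ≤ a ∧ p.2 ≤ b} := by
    simp only [← lt_mul_iff_le_of_isLeast hu (a := a), ← lt_mul_iff_le_of_isLeast hu (a := b)]
    exact (isOpen_setOf_fst_lt hl (u * a)).inter (isOpen_setOf_snd_lt hr (u * b))
  rw [singleton_eq_inter_preimage hu]
  exact (hquad.preimage ((hl _).comp (hr _))).inter (isOpen_compl_singleton.preimage (hl _))

/-- Theorem 3.6 for `𝓑(G)`: if a linearly ordered group `G` is not densely ordered,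
then every Hausdorff topology on `𝓑(G)` with separately continuous multiplication
is discrete. -/
theorem not_densely_ordered_implies_discrete {G : Type*} [Group G] [LinearOrder G]
    [CovariantClass G G (· * ·) (· ≤ ·)]
    [CovariantClass G G (Function.swap (· * ·)) (· ≤ ·)]
    (hnd : ¬ ∀ g : G, 1 < g → ∃ h : G, 1 < h ∧ h < g)
    [TopologicalSpace (G × G)] [T2Space (G × G)]
    (hl : ∀ s : G × G, Continuous fun x : G × G => bmul s x)
    (hr : ∀ s : G × G, Continuous fun x : G × G => bmul x s) :
    DiscreteTopology (G × G) :=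
  not_densely_ordered_implies_discrete_general hnd hl hr
end

section
/- Let G be a linearly ordered group which is not densely ordered, and let τ be a Hausdorff topology on 𝓑⁺(G) such that for every s ∈ 𝓑⁺(G) the left translation x ↦ s·x and the right translation x ↦ x·s are continuous. Then the topological space (𝓑⁺(G), τ) is discrete. -/
/-- `𝓑⁺(G)` is closed under the multiplication of `𝓑(G)`. -/
theorem bmul_mem {G : Type*} [Group G] [LinearOrder G]
    [CovariantClass G G (· * ·) (· ≤ ·)]
    [CovariantClass G G (Function.swap (· * ·)) (· ≤ ·)]
    {s t : G × G} (hs : 1 ≤ s.1 ∧ 1 ≤ s.2) (ht : 1 ≤ t.1 ∧ 1 ≤ t.2) :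
    1 ≤ (bmul s t).1 ∧ 1 ≤ (bmul s t).2 := by
  unfold bmul
  split_ifs with h1 h2
  · refine ⟨?_, ht.2⟩
    have hb : (1 : G) ≤ t.1 * s.2⁻¹ := by
      have := mul_le_mul' h1.le (le_refl s.2⁻¹)
      rwa [mul_inv_cancel] at this
    calc (1 : G) = 1 * 1 := (one_mul 1).symm
    _ ≤ (t.1 * s.2⁻¹) * s.1 := mul_le_mul' hb hs.1
  · exact ⟨hs.1, ht.2⟩
  · refine ⟨hs.1, ?_⟩
    have hlt : t.1 < s.2 := lt_of_le_of_ne (not_lt.mp h1) (fun h => h2 h.symm)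
    have hb : (1 : G) ≤ s.2 * t.1⁻¹ := by
      have := mul_le_mul' hlt.le (le_refl t.1⁻¹)
      rwa [mul_inv_cancel] at this
    calc (1 : G) = 1 * 1 := (one_mul 1).symm
    _ ≤ (s.2 * t.1⁻¹) * t.2 := mul_le_mul' hb ht.2

/-- The subsemigroup `𝓑⁺(G)` of `𝓑(G)`, consisting of all pairs `(a,b)` with
`1 ≤ a` and `1 ≤ b`, as a type. -/
def BPlus (G : Type*) [Group G] [LinearOrder G] : Type _ :=
  {p : G × G // 1 ≤ p.1 ∧ 1 ≤ p.2}

/-- The multiplication on `𝓑⁺(G)`, inherited from `𝓑(G)`. -/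
def bmulPos {G : Type*} [Group G] [LinearOrder G]
    [CovariantClass G G (· * ·) (· ≤ ·)]
    [CovariantClass G G (Function.swap (· * ·)) (· ≤ ·)]
    (s t : BPlus G) : BPlus G :=
  ⟨bmul s.1 t.1, bmul_mem s.2 t.2⟩

/-!
Since `G` is not densely ordered it has a least element `u > 1`. Put `p = (1, u)` and
`q = (u, 1)`. Every element `x ≠ (1, 1)` of `𝓑⁺(G)` is fixed by `x ↦ q·(p·x)` (if `x.1 ≥ u`) or
by `x ↦ (x·q)·p` (if `x.2 ≥ u`), while both send `(1, 1)` to `(u, u)`; fixed-point sets are closed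
in a Hausdorff space, so `(1, 1)` is isolated. Its preimage under `x ↦ (1, a)·x` is `{(a, 1)}`,
whose preimage under `x ↦ x·(b, 1)` is the "line" of all `(c, d)` with `d ≤ b` and
`b·d⁻¹·c = a`. For `b > 1`, right multiplication by `(u⁻¹·b, 1)` sends `(a, b)` to `(a, u)`
and collapses the rest of this line to the single, closed, point `(u⁻¹·a, 1)`, which isolates
`(a, b)`.
-/

section Bicyclic

variable {G : Type*} [Group G] [LinearOrder G]

theorem BPlus.ext_iff {x y : BPlus G} : x = y ↔ x.1 = y.1 :=
  Subtype.ext_iff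

lemma bmul_of_le {s t : G × G} (h : s.2 ≤ t.1) : bmul s t = (t.1 * s.2⁻¹ * s.1, t.2) := by
  rcases h.lt_or_eq with h | h
  · simp [bmul, h]
  · simp [bmul, h]

lemma bmul_of_ge {s t : G × G} (h : t.1 ≤ s.2) : bmul s t = (s.1, s.2 * t.1⁻¹ * t.2) := by
  rcases h.lt_or_eq with h | h
  · simp [bmul, h.not_gt, h.ne']
  · simp [bmul, h]

lemma bmul_one_left_eq_one_iff [MulLeftMono G] [MulRightMono G] {a : G} {y : G × G}
    (hy : 1 ≤ y.2) : bmul (1, a) y = (1, 1) ↔ y = (a, 1) := by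
  rcases le_total a y.1 with h | h
  · simp [bmul_of_le (s := (1, a)) h, Prod.ext_iff, mul_inv_eq_one]
  · rw [bmul_of_ge (s := (1, a)) h, Prod.ext_iff, Prod.ext_iff,
      mul_eq_one_iff_of_one_le (le_mul_inv_iff_le.mpr h) hy, mul_inv_eq_one]
    simp [eq_comm]

lemma bmul_one_right_eq_iff {a b : G} {x : G × G} :
    bmul x (b, 1) = (a, 1) ↔ x.2 ≤ b ∧ b * x.2⁻¹ * x.1 = a := by
  rcases le_or_gt x.2 b with h | h
  · simp [bmul_of_le (t := (b, 1)) h, h]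
  · simp [bmul_of_ge (t := (b, 1)) h.le, h.not_ge, h.ne', mul_inv_eq_one]

lemma bmul_bmul_of_le_fst [MulRightMono G] {u : G} {t : G × G} (ht : u ≤ t.1) :
    bmul (u, 1) (bmul (1, u) t) = t := by
  rw [bmul_of_le (s := (1, u)) ht, bmul_of_le (by simpa using ht)]
  simp

lemma bmul_bmul_of_le_snd [MulRightMono G] {u : G} {t : G × G} (ht : u ≤ t.2) :
    bmul (bmul t (u, 1)) (1, u) = t := by
  rw [bmul_of_ge (t := (u, 1)) ht, bmul_of_ge (by simpa using ht)]
  simp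

lemma le_inv_mul_of_lt [MulLeftMono G] [MulRightMono G] {u x b : G}
    (hu : IsLeast {g : G | 1 < g} u) (h : x < b) : x ≤ u⁻¹ * b :=
  le_inv_mul_iff_mul_le.mpr (le_mul_inv_iff_mul_le.mp (hu.2 (lt_mul_inv_iff_lt.mpr h)))

lemma eq_iff_bmul_right_eq_and_ne [MulLeftMono G] [MulRightMono G] {u a b : G}
    (hu : IsLeast {g : G | 1 < g} u) {x : G × G} :
    x = (a, b) ↔ bmul x (b, 1) = (a, 1) ∧ bmul x (u⁻¹ * b, 1) ≠ (u⁻¹ * a, 1) := by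
  rw [bmul_one_right_eq_iff]
  constructor
  · rintro rfl
    have hub : u⁻¹ * b ≤ b := inv_mul_le_iff_le_mul.mpr (le_mul_of_one_le_left' hu.1.le)
    simp [bmul_of_ge (s := (a, b)) (t := (u⁻¹ * b, 1)) hub, Prod.ext_iff, hu.1.ne']
  · rintro ⟨⟨hle, hline⟩, hne⟩
    rcases hle.eq_or_lt with heq | hlt
    · rw [heq, mul_inv_cancel, one_mul] at hline
      exact Prod.ext hline heq
    · refine absurd ?_ hne
      rw [bmul_of_le (t := (u⁻¹ * b, 1)) (le_inv_mul_of_lt hu hlt), ← hline]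
      simp [mul_assoc]

end Bicyclic

section Topology

variable {G : Type*} [Group G] [LinearOrder G] [MulLeftMono G] [MulRightMono G]
    [TopologicalSpace (BPlus G)]

lemma isOpen_setOf_val_eq_one_one [T2Space (BPlus G)] {u : G} (hu : IsLeast {g : G | 1 < g} u)
    (hl : ∀ s : BPlus G, Continuous fun x => bmulPos s x)
    (hr : ∀ s : BPlus G, Continuous fun x => bmulPos x s) :
    IsOpen {x : BPlus G | x.1 = (1, 1)} := by
  let p : BPlus G := ⟨(1, u), le_rfl, hu.1.le⟩
  let q : BPlus G := ⟨(u, 1), hu.1.le, le_rfl⟩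
  have hfix : {x : BPlus G | x.1 = (1, 1)} =
      ({x | bmulPos q (bmulPos p x) = x} ∪ {x | bmulPos (bmulPos x q) p = x})ᶜ := by
    ext x
    simp only [Set.mem_ofPred_eq, Set.mem_compl_iff, Set.mem_union, not_or, BPlus.ext_iff]
    change x.1 = (1, 1) ↔
      ¬bmul (u, 1) (bmul (1, u) x.1) = x.1 ∧ ¬bmul (bmul x.1 (u, 1)) (1, u) = x.1
    constructor
    · intro hx
      have hu1 : 1 < u := hu.1
      simp [hx, bmul, hu1, hu1.ne', hu1.not_gt]
    · rintro ⟨hf, hg⟩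
      have h1 : x.1.1 = 1 := of_not_not fun h =>
        hf (bmul_bmul_of_le_fst (hu.2 (x.2.1.lt_of_ne' h)))
      have h2 : x.1.2 = 1 := of_not_not fun h =>
        hg (bmul_bmul_of_le_snd (hu.2 (x.2.2.lt_of_ne' h)))
      exact Prod.ext h1 h2
  rw [hfix]
  exact ((isClosed_eq ((hl q).comp (hl p)) continuous_id).union
    (isClosed_eq ((hr p).comp (hr q)) continuous_id)).isOpen_compl

lemma isOpen_setOf_val_eq_mk_one (hl : ∀ s : BPlus G, Continuous fun x => bmulPos s x)
    (he : IsOpen {x : BPlus G | x.1 = (1, 1)}) {a : G} (ha : 1 ≤ a) :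
    IsOpen {x : BPlus G | x.1 = (a, 1)} := by
  have hpre : {x : BPlus G | x.1 = (a, 1)} =
      (bmulPos ⟨(1, a), le_rfl, ha⟩ ·) ⁻¹' {x | x.1 = (1, 1)} := by
    ext x
    exact (bmul_one_left_eq_one_iff x.2.2).symm
  rw [hpre]
  exact he.preimage (hl _)

lemma isOpen_setOf_val_eq_of_one_lt [T1Space (BPlus G)] {u : G}
    (hu : IsLeast {g : G | 1 < g} u) (hr : ∀ s : BPlus G, Continuous fun x => bmulPos x s)
    {a b : G} (hb : 1 < b) (hopen : IsOpen {x : BPlus G | x.1 = (a, 1)}) :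
    IsOpen {x : BPlus G | x.1 = (a, b)} := by
  let r : BPlus G := ⟨(b, 1), hb.le, le_rfl⟩
  let t : BPlus G := ⟨(u⁻¹ * b, 1), le_inv_mul_iff_le.mpr (hu.2 hb), le_rfl⟩
  have hline : IsOpen ((bmulPos · r) ⁻¹' {x | x.1 = (a, 1)}) := hopen.preimage (hr r)
  have hpoint : IsClosed {y : BPlus G | y.1 = (u⁻¹ * a, 1)} :=
    Set.Subsingleton.isClosed fun y hy z hz => BPlus.ext_iff.mpr (hy.trans hz.symm)
  have hcut : IsOpen ((bmulPos · t) ⁻¹' {y | y.1 ≠ (u⁻¹ * a, 1)}) :=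
    hpoint.isOpen_compl.preimage (hr t)
  convert hline.inter hcut using 1
  ext x
  exact eq_iff_bmul_right_eq_and_ne hu

end Topology

/-- Theorem 3.6 for `𝓑⁺(G)`: if a linearly ordered group `G` is not densely ordered,
then every Hausdorff topology on `𝓑⁺(G)` with separately continuous multiplication
is discrete. -/
theorem not_densely_ordered_implies_discrete_pos {G : Type*} [Group G] [LinearOrder G]
    [CovariantClass G G (· * ·) (· ≤ ·)]
    [CovariantClass G G (Function.swap (· * ·)) (· ≤ ·)]
    (hnd : ¬ ∀ g : G, 1 < g → ∃ h : G, 1 < h ∧ h < g)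
    [TopologicalSpace (BPlus G)] [T2Space (BPlus G)]
    (hl : ∀ s : BPlus G, Continuous fun x : BPlus G => bmulPos s x)
    (hr : ∀ s : BPlus G, Continuous fun x : BPlus G => bmulPos x s) :
    DiscreteTopology (BPlus G) := by
  push Not at hnd
  obtain ⟨u, hu⟩ : ∃ u, IsLeast {g : G | 1 < g} u := hnd
  have he := isOpen_setOf_val_eq_one_one hu hl hr
  refine discreteTopology_iff_isOpen_singleton.mpr fun x => ?_
  rw [show {x} = {y : BPlus G | y.1 = x.1} from Set.ext fun y => BPlus.ext_iff]
  obtain ⟨⟨a, b⟩, ha, hb⟩ := x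
  rcases hb.eq_or_lt with rfl | hb
  · exact isOpen_setOf_val_eq_mk_one hl he ha
  · exact isOpen_setOf_val_eq_of_one_lt hu hr hb (isOpen_setOf_val_eq_mk_one hl he ha)
end
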